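/- (Reduction of almost r-embeddings to equivariant maps.) Let a be a prime, r = a^m, d ≥ 1, and n := d(r−1) − 1. Let G := (ℤ/a)^m act on the simplicial deleted product X^{\underline r} of a finite simplicial complex X by permuting the r coordinates, where the permutations correspond to the action of G on itself by left shifts. If there exists an almost r-embedding X → ℝ^d, then there exist a fixed-point-free continuous action of G on the sphere S^n and a G-equivariant continuous map X^{\underline r} → S^n. -/

import Mathlib

open CategoryTheory Geometry

/-- The singular chain complex functor with coefficients in a commutative ring `R`,
obtained from the singular simplicial set by applying the free `R`-module functor levelwise
and taking the alternating face map complex. -/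
noncomputable def singularChainComplexFunctor (R : Type) [CommRing R] :
    TopCat.{0} ⥤ ChainComplex (ModuleCat R) ℕ :=
  TopCat.toSSet ⋙ ((SimplicialObject.whiskering _ _).obj (ModuleCat.free R)) ⋙
    AlgebraicTopology.alternatingFaceMapComplex _

/-- Singular homology `H_n(X; R)`. -/
noncomputable def singularHomology (R : Type) [CommRing R] (n : ℕ)
    (X : Type) [TopologicalSpace X] : ModuleCat R :=
  ((singularChainComplexFunctor R).obj (TopCat.of X)).homology n

/-- A space is `n`-acyclic (with `ℤ/a` coefficients) if it is non-empty and its reduced singular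
homology with `ℤ/a` coefficients vanishes in all degrees `j ≤ n`; equivalently (over the field
`ℤ/a`), it is non-empty and its unreduced singular homology is isomorphic to that of a point in
all degrees `j ≤ n`. -/
def IsAcyclicSpace (a : ℕ) (X : Type) [TopologicalSpace X] (n : ℤ) : Prop :=
  Nonempty X ∧ ∀ j : ℕ, (j : ℤ) ≤ n →
    Nonempty ((singularHomology (ZMod a) j X) ≅ (singularHomology (ZMod a) j PUnit))
/-- The simplicial deleted product `X^{\underline r}` of a simplicial complex, as a subspace of
`|X|^r`: tuples `(x 0, …, x (r-1))` such that `x i` lies in (the realization of) the face `σ i`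
for some pairwise vertex-disjoint faces `σ 0, …, σ (r-1)`. -/
def deletedProduct {E : Type} [NormedAddCommGroup E] [NormedSpace ℝ E]
    (K : Geometry.SimplicialComplex ℝ E) (r : ℕ) : Set (Fin r → E) :=
  {x | ∃ σ : Fin r → Finset E, (∀ i, σ i ∈ K.faces) ∧
    (Pairwise fun i j => Disjoint (σ i) (σ j)) ∧ ∀ i, x i ∈ convexHull ℝ ((σ i : Set E))}

/-- The subcomplex `X − A` of all faces of `X` disjoint from the set `A`. -/
def Geometry.SimplicialComplex.minus {E : Type} [NormedAddCommGroup E] [NormedSpace ℝ E]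
    (K : Geometry.SimplicialComplex ℝ E) (A : Set E) : Geometry.SimplicialComplex ℝ E where
  faces := {τ | τ ∈ K.faces ∧ Disjoint (τ : Set E) A}
  isRelLowerSet_faces := fun _ h => ⟨K.isRelLowerSet_faces.prop_of_mem h.1,
    fun _ hts ht => ⟨K.isRelLowerSet_faces.mem_of_le h.1 hts ht,
      Set.disjoint_of_subset_left (by exact_mod_cast hts) h.2⟩⟩
  indep h := K.indep h.1
  inter_subset_convexHull hs ht := K.inter_subset_convexHull hs.1 ht.1

/-- `X` is `s`-complementary `n`-acyclic (with `ℤ/a` coefficients) if for every `i ≤ s` and all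
pairwise disjoint faces `σ 1, …, σ i` of `X`, the complex `X − σ 1 − … − σ i` is
`(n − dim σ 1 − … − dim σ i)`-acyclic. -/
def IsComplementaryAcyclic {E : Type} [NormedAddCommGroup E] [NormedSpace ℝ E]
    (a : ℕ) (K : Geometry.SimplicialComplex ℝ E) (s : ℕ) (n : ℤ) : Prop :=
  ∀ i : ℕ, i ≤ s → ∀ σ : Fin i → Finset E, (∀ j, σ j ∈ K.faces) →
    (Pairwise fun j k => Disjoint (σ j) (σ k)) →
    IsAcyclicSpace a ((K.minus (⋃ j, ((σ j : Set E)))).space : Set E)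
      (n - ∑ j, (((σ j).card : ℤ) - 1))
/-- A continuous map `f : |X| → ℝ^d` is an almost `r`-embedding if the images of every `r`
pairwise (vertex-)disjoint faces of `X` have empty common intersection. -/
def IsAlmostREmbedding {E : Type} [NormedAddCommGroup E] [NormedSpace ℝ E]
    (K : Geometry.SimplicialComplex ℝ E) (r d : ℕ)
    (f : K.space → EuclideanSpace ℝ (Fin d)) : Prop :=
  Continuous f ∧ ∀ σ : Fin r → Finset E, (∀ i, σ i ∈ K.faces) →
    (Pairwise fun i j => Disjoint (σ i) (σ j)) →
    (⋂ i, f '' {x : K.space | (x : E) ∈ convexHull ℝ ((σ i : Set E))}) = ∅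

/-! The group `G` permutes the `r` coordinates of `(ℝ^d)^r` transitively and preserves the
zero-sum subspace `W`, of dimension `d(r-1)`. A vector of `W` fixed by all of `G` is constant,
hence zero, so `G` acts on the unit sphere of `W ≅ ℝ^{d(r-1)}` without common fixed points.
For an almost `r`-embedding `f` and a point `x` of the deleted product, the deviations
`f(x_i) - (1/r) ∑_j f(x_j)` form a nonzero vector of `W`: if they all vanished, the common value
of the `f(x_i)` would lie in the images of `r` pairwise disjoint faces. Normalising this vector
gives the equivariant map. -/

open Module

section ZeroSum
variable (ι : Type*) [Fintype ι] (F : Type*) [NormedAddCommGroup F] [NormedSpace ℝ F]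

def coordSum : (PiLp 2 fun _ : ι => F) →ₗ[ℝ] F := ∑ i, PiLp.projₗ 2 _ i

def zeroSumSubspace : Submodule ℝ (PiLp 2 fun _ : ι => F) := LinearMap.ker (coordSum ι F)

variable {ι F}

@[simp]
lemma coordSum_apply (v : PiLp 2 fun _ : ι => F) : coordSum ι F v = ∑ i, v i := by
  simp [coordSum]

lemma mem_zeroSumSubspace {v : PiLp 2 fun _ : ι => F} :
    v ∈ zeroSumSubspace ι F ↔ ∑ i, v i = 0 := by
  simp [zeroSumSubspace]

lemma coordSum_surjective [Nonempty ι] : Function.Surjective (coordSum ι F) := fun c =>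
  ⟨WithLp.toLp 2 fun _ => (Fintype.card ι : ℝ)⁻¹ • c, by
    simp [Finset.card_univ, ← Nat.cast_smul_eq_nsmul ℝ]⟩

lemma finrank_zeroSumSubspace [Nonempty ι] [FiniteDimensional ℝ F] :
    finrank ℝ (zeroSumSubspace ι F) = finrank ℝ F * (Fintype.card ι - 1) := by
  have := LinearMap.finrank_range_add_finrank_ker (coordSum ι F)
  rw [LinearMap.range_eq_top.2 coordSum_surjective, finrank_top,
    (WithLp.linearEquiv 2 ℝ _).finrank_eq, Module.finrank_pi_fintype] at this
  simp only [Finset.sum_const, Finset.card_univ, smul_eq_mul] at this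
  rw [zeroSumSubspace, Nat.mul_sub_one, mul_comm]
  omega

namespace zeroSumSubspace

noncomputable def permute (p : Equiv.Perm ι) :
    zeroSumSubspace ι F ≃ₗᵢ[ℝ] zeroSumSubspace ι F :=
  let P := LinearIsometryEquiv.piLpCongrLeft 2 ℝ F p.symm
  { P.toLinearEquiv.ofSubmodules _ _ (by
      rw [Submodule.map_equiv_eq_comap_symm, zeroSumSubspace, ← LinearMap.ker_comp]
      refine congrArg LinearMap.ker (LinearMap.ext fun v => ?_)
      simpa [P] using Equiv.sum_comp p.symm _) with
    norm_map' := fun v => P.norm_map v }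

@[simp]
lemma permute_apply (p : Equiv.Perm ι) (v : zeroSumSubspace ι F) (i : ι) :
    (permute p v : PiLp 2 fun _ : ι => F) i = (v : PiLp 2 fun _ : ι => F) (p i) :=
  rfl

lemma permute_mul (p q : Equiv.Perm ι) :
    permute (F := F) (p * q) = (permute p).trans (permute q) :=
  LinearIsometryEquiv.ext fun _ => Subtype.ext (PiLp.ext fun _ => rfl)

@[simp]
lemma permute_one : permute (F := F) (1 : Equiv.Perm ι) = LinearIsometryEquiv.refl ℝ _ :=
  LinearIsometryEquiv.ext fun _ => Subtype.ext (PiLp.ext fun _ => rfl)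

lemma eq_zero_of_forall_permute_eq {G : Type*} (σ : G → Equiv.Perm ι)
    (htrans : ∀ i j, ∃ g, σ g i = j) {v : zeroSumSubspace ι F} (hv : ∀ g, permute (σ g) v = v) :
    v = 0 := by
  have hconst (i j : ι) :
      (v : PiLp 2 fun _ : ι => F) i = (v : PiLp 2 fun _ : ι => F) j := by
    obtain ⟨g, hg⟩ := htrans j i
    rw [← hg, ← permute_apply, hv]
  refine Subtype.ext (PiLp.ext fun i => ?_)
  have hsum := mem_zeroSumSubspace.1 v.2
  have : Nonempty ι := ⟨i⟩
  simpa [hconst _ i, ← Nat.cast_smul_eq_nsmul ℝ, Fintype.card_ne_zero] using hsum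

end zeroSumSubspace

end ZeroSum

section Shift
variable {G ι : Type*}

def shiftPerm [AddGroup G] (e : G ≃ ι) (g : G) : Equiv.Perm ι := e.permCongr (Equiv.addLeft g)

@[simp]
lemma shiftPerm_apply [AddGroup G] (e : G ≃ ι) (g : G) (i : ι) :
    shiftPerm e g i = e (g + e.symm i) :=
  rfl

@[simp]
lemma shiftPerm_zero [AddGroup G] (e : G ≃ ι) : shiftPerm e 0 = 1 := by
  ext; simp

lemma shiftPerm_add [AddCommGroup G] (e : G ≃ ι) (g h : G) :
    shiftPerm e (g + h) = shiftPerm e h * shiftPerm e g := by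
  ext; simp [add_assoc, add_comm g h]

lemma exists_shiftPerm_apply_eq [AddGroup G] (e : G ≃ ι) (i j : ι) : ∃ g, shiftPerm e g i = j :=
  ⟨e.symm j - e.symm i, by simp⟩

end Shift

section MeanDeviation
variable {ι : Type*} [Fintype ι] {F : Type*} [NormedAddCommGroup F] [NormedSpace ℝ F]
  {X : Type*} {f : X → F}

variable (f) in
noncomputable def meanDeviation (x : ι → X) : zeroSumSubspace ι F :=
  ⟨WithLp.toLp 2 fun i => f (x i) - (Fintype.card ι : ℝ)⁻¹ • ∑ j, f (x j), by
    rw [mem_zeroSumSubspace]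
    rcases isEmpty_or_nonempty ι with hι | hι
    · simp
    · simp [Finset.sum_sub_distrib, ← Nat.cast_smul_eq_nsmul ℝ,
        Fintype.card_ne_zero]⟩

lemma meanDeviation_comp (x : ι → X) (p : Equiv.Perm ι) :
    meanDeviation f (x ∘ p) = zeroSumSubspace.permute p (meanDeviation f x) := by
  refine Subtype.ext (PiLp.ext fun i => ?_)
  simp [meanDeviation, Equiv.sum_comp p (fun j => f (x j))]

lemma exists_forall_eq_of_meanDeviation_eq_zero {x : ι → X} (h : meanDeviation f x = 0) :
    ∃ c, ∀ i, f (x i) = c := by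
  refine ⟨(Fintype.card ι : ℝ)⁻¹ • ∑ j, f (x j), fun i => sub_eq_zero.1 ?_⟩
  simpa [meanDeviation] using
    congrArg (fun v : zeroSumSubspace ι F => (v : PiLp 2 fun _ : ι => F) i) h

lemma continuous_meanDeviation [TopologicalSpace X] (hf : Continuous f) :
    Continuous (meanDeviation (ι := ι) f) := by
  unfold meanDeviation
  fun_prop

end MeanDeviation

section UnitSphere
open Metric
variable {V : Type*} [NormedAddCommGroup V] [NormedSpace ℝ V]

def LinearIsometryEquiv.sphereMap (T : V ≃ₗᵢ[ℝ] V) : sphere (0 : V) 1 → sphere (0 : V) 1 :=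
  fun y => ⟨T y, by simp⟩

@[simp]
lemma LinearIsometryEquiv.coe_sphereMap (T : V ≃ₗᵢ[ℝ] V) (y : sphere (0 : V) 1) :
    (T.sphereMap y : V) = T y :=
  rfl

lemma LinearIsometryEquiv.continuous_sphereMap (T : V ≃ₗᵢ[ℝ] V) : Continuous T.sphereMap :=
  (T.continuous.comp continuous_subtype_val).subtype_mk _

noncomputable def toUnitSphere (v : V) (hv : v ≠ 0) : sphere (0 : V) 1 :=
  ⟨‖v‖⁻¹ • v, by simp [norm_smul, hv]⟩

lemma LinearIsometryEquiv.sphereMap_toUnitSphere (T : V ≃ₗᵢ[ℝ] V) {v : V} (hv : v ≠ 0) :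
    T.sphereMap (toUnitSphere v hv) = toUnitSphere (T v) (by simpa using hv) :=
  Subtype.ext (by simp [toUnitSphere])

lemma Continuous.toUnitSphere {X : Type*} [TopologicalSpace X] {w : X → V} (hw : Continuous w)
    (h0 : ∀ x, w x ≠ 0) : Continuous fun x => _root_.toUnitSphere (w x) (h0 x) :=
  ((hw.norm.inv₀ fun x => norm_ne_zero_iff.2 (h0 x)).smul hw).subtype_mk _

end UnitSphere

section DeletedProduct
variable {E : Type} [NormedAddCommGroup E] [NormedSpace ℝ E] {K : SimplicialComplex ℝ E}
  {r : ℕ}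

lemma mem_space_of_mem_deletedProduct {x : Fin r → E} (hx : x ∈ deletedProduct K r)
    (i : Fin r) : x i ∈ K.space := by
  obtain ⟨σ, hσ, -, hmem⟩ := hx
  exact Set.mem_biUnion (hσ i) (hmem i)

lemma comp_perm_mem_deletedProduct {x : Fin r → E} (hx : x ∈ deletedProduct K r)
    (p : Equiv.Perm (Fin r)) : x ∘ p ∈ deletedProduct K r := by
  obtain ⟨σ, hσ, hdisj, hmem⟩ := hx
  exact ⟨σ ∘ p, fun i => hσ _, fun i j hij => hdisj (p.injective.ne hij), fun i => hmem _⟩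

variable (K r) in
def deletedProductCoords (x : deletedProduct K r) (i : Fin r) : K.space :=
  ⟨x.1 i, mem_space_of_mem_deletedProduct x.2 i⟩

lemma continuous_deletedProductCoords : Continuous (deletedProductCoords K r) :=
  continuous_pi fun i => ((continuous_apply i).comp continuous_subtype_val).subtype_mk _

lemma IsAlmostREmbedding.meanDeviation_ne_zero {d : ℕ} {f : K.space → EuclideanSpace ℝ (Fin d)}
    (hf : IsAlmostREmbedding K r d f) (x : deletedProduct K r) :
    meanDeviation f (deletedProductCoords K r x) ≠ 0 := by
  intro h0
  obtain ⟨c, hc⟩ := exists_forall_eq_of_meanDeviation_eq_zero h0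
  obtain ⟨σ, hσ, hdisj, hmem⟩ := x.2
  have hc_mem : c ∈ ⋂ i, f '' {y : K.space | (y : E) ∈ convexHull ℝ (σ i : Set E)} :=
    Set.mem_iInter.2 fun i => ⟨_, hmem i, hc i⟩
  rwa [hf.2 σ hσ hdisj] at hc_mem

end DeletedProduct

theorem almost_r_embedding_gives_equivariant_map_general
    {E : Type} [NormedAddCommGroup E] [NormedSpace ℝ E]
    (a m r d : ℕ) (ha : a.Prime) (hr : r = a ^ m)
    (K : Geometry.SimplicialComplex ℝ E)
    (hf : ∃ f : K.space → EuclideanSpace ℝ (Fin d), IsAlmostREmbedding K r d f) :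
    ∃ e : (Fin m → ZMod a) ≃ Fin r,
      -- the left-shift permutation action of `G` preserves the deleted product …
      (∀ (g : Fin m → ZMod a), ∀ x ∈ deletedProduct K r,
        (fun i => x (e (g + e.symm i))) ∈ deletedProduct K r) ∧
      -- … and there are a fixed-point free continuous action of `G` on `S^n`
      ∃ actS : (Fin m → ZMod a) →
          (Metric.sphere (0 : EuclideanSpace ℝ (Fin (d * (r - 1)))) 1 : Set _) →
          (Metric.sphere (0 : EuclideanSpace ℝ (Fin (d * (r - 1)))) 1 : Set _),
        (∀ g, Continuous (actS g)) ∧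
        (∀ y, actS 0 y = y) ∧
        (∀ g h y, actS (g + h) y = actS g (actS h y)) ∧
        (∀ y, ∃ g, actS g y ≠ y) ∧
        -- and a `G`-equivariant continuous map `X^{\underline r} → S^n`.
        ∃ F : deletedProduct K r →
            (Metric.sphere (0 : EuclideanSpace ℝ (Fin (d * (r - 1)))) 1 : Set _),
          Continuous F ∧
          ∀ (g : Fin m → ZMod a) (x : deletedProduct K r)
            (hgx : (fun i => (x : Fin r → E) (e (g + e.symm i))) ∈ deletedProduct K r),
            F ⟨fun i => (x : Fin r → E) (e (g + e.symm i)), hgx⟩ = actS g (F x) := by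
  obtain ⟨f, hf⟩ := hf
  have : NeZero a := ⟨ha.ne_zero⟩
  let e : (Fin m → ZMod a) ≃ Fin r := Fintype.equivFinOfCardEq (by simp [ZMod.card, hr])
  have : Nonempty (Fin r) := ⟨e 0⟩
  let W := zeroSumSubspace (Fin r) (EuclideanSpace ℝ (Fin d))
  have hdim : finrank ℝ W = d * (r - 1) := by simp [W, finrank_zeroSumSubspace]
  let φ := ((stdOrthonormalBasis ℝ W).reindex (finCongr hdim)).repr
  let T (g : Fin m → ZMod a) := φ.symm.trans ((zeroSumSubspace.permute (shiftPerm e g)).trans φ)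
  have hF_ne_zero (x : deletedProduct K r) :
      φ (meanDeviation f (deletedProductCoords K r x)) ≠ 0 := by
    simpa using hf.meanDeviation_ne_zero x
  refine ⟨e, fun g x hx => comp_perm_mem_deletedProduct hx (shiftPerm e g),
    fun g => (T g).sphereMap, fun g => (T g).continuous_sphereMap,
    fun y => Subtype.ext (by simp [T]), fun g h y => Subtype.ext ?_, fun y => ?_,
    fun x => toUnitSphere _ (hF_ne_zero x),
    (φ.continuous.comp ((continuous_meanDeviation hf.1).comp
      continuous_deletedProductCoords)).toUnitSphere hF_ne_zero, fun g x hgx => ?_⟩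
  · simp [T, shiftPerm_add, zeroSumSubspace.permute_mul]
  · by_contra! hfix
    have : φ.symm y = 0 := zeroSumSubspace.eq_zero_of_forall_permute_eq (shiftPerm e)
      (exists_shiftPerm_apply_eq e)
      fun g => by simpa [T] using congrArg φ.symm (congrArg Subtype.val (hfix g))
    exact ne_zero_of_mem_unit_sphere y (by simpa using this)
  · dsimp only
    rw [LinearIsometryEquiv.sphereMap_toUnitSphere]
    congr 1
    simp only [T, LinearIsometryEquiv.trans_apply, LinearIsometryEquiv.symm_apply_apply]
    exact congrArg φ (meanDeviation_comp (deletedProductCoords K r x) (shiftPerm e g))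

theorem almost_r_embedding_gives_equivariant_map
    {E : Type} [NormedAddCommGroup E] [NormedSpace ℝ E]
    (a m r d : ℕ) (ha : a.Prime) (hr : r = a ^ m) (hd : 1 ≤ d)
    (K : Geometry.SimplicialComplex ℝ E) (hKfin : K.faces.Finite)
    (hf : ∃ f : K.space → EuclideanSpace ℝ (Fin d), IsAlmostREmbedding K r d f) :
    ∃ e : (Fin m → ZMod a) ≃ Fin r,
      -- the left-shift permutation action of `G` preserves the deleted product …
      (∀ (g : Fin m → ZMod a), ∀ x ∈ deletedProduct K r,
        (fun i => x (e (g + e.symm i))) ∈ deletedProduct K r) ∧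
      -- … and there are a fixed-point free continuous action of `G` on `S^n`
      ∃ actS : (Fin m → ZMod a) →
          (Metric.sphere (0 : EuclideanSpace ℝ (Fin (d * (r - 1)))) 1 : Set _) →
          (Metric.sphere (0 : EuclideanSpace ℝ (Fin (d * (r - 1)))) 1 : Set _),
        (∀ g, Continuous (actS g)) ∧
        (∀ y, actS 0 y = y) ∧
        (∀ g h y, actS (g + h) y = actS g (actS h y)) ∧
        (∀ y, ∃ g, actS g y ≠ y) ∧
        -- and a `G`-equivariant continuous map `X^{\underline r} → S^n`.
        ∃ F : deletedProduct K r →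
            (Metric.sphere (0 : EuclideanSpace ℝ (Fin (d * (r - 1)))) 1 : Set _),
          Continuous F ∧
          ∀ (g : Fin m → ZMod a) (x : deletedProduct K r)
            (hgx : (fun i => (x : Fin r → E) (e (g + e.symm i))) ∈ deletedProduct K r),
            F ⟨fun i => (x : Fin r → E) (e (g + e.symm i)), hgx⟩ = actS g (F x) :=
  almost_r_embedding_gives_equivariant_map_general a m r d ha hr K hf
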